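/- arXiv:1502.06722 — 11 statements merged into one kernel-verified Lean document; each statement's English description precedes it below -/
import Mathlib

section
/- The line graph functor commutes with tensor products of oriented graphs: for oriented graphs Γ₁ and Γ₂, the graphs L(Γ₁) ⊗ L(Γ₂) and L(Γ₁ ⊗ Γ₂) are isomorphic. -/
/-- An oriented (multi)graph: vertices, edges, initial and terminal maps. -/
structure OGraph where
  V : Type
  E : Type
  ι : E → V
  τ : E → V

namespace OGraph

/-- Tensor product of oriented graphs. -/
def tensor (G H : OGraph) : OGraph where
  V := G.V × H.V
  E := G.E × H.E
  ι e := (G.ι e.1, H.ι e.2)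
  τ e := (G.τ e.1, H.τ e.2)

/-- Isomorphism of oriented graphs. -/
structure Iso (G H : OGraph) where
  fV : G.V ≃ H.V
  fE : G.E ≃ H.E
  hι : ∀ e, H.ι (fE e) = fV (G.ι e)
  hτ : ∀ e, H.τ (fE e) = fV (G.τ e)

/-- The line graph of an oriented graph: vertices are the edges, with an edge from
`e` to `f` whenever `f` directly follows `e`. -/
def line (G : OGraph) : OGraph where
  V := G.E
  E := {p : G.E × G.E // G.τ p.1 = G.ι p.2}
  ι p := p.1.1
  τ p := p.1.2

end OGraph

/-- The line graph functor commutes with tensor products: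
`L(Γ₁) ⊗ L(Γ₂) ≅ L(Γ₁ ⊗ Γ₂)`. -/
theorem line_tensor_iso (G₁ G₂ : OGraph) :
    Nonempty (OGraph.Iso ((G₁.line).tensor (G₂.line)) ((G₁.tensor G₂).line)) := by
  refine ⟨⟨Equiv.refl _, ⟨?_, ?_, ?_, ?_⟩, ?_, ?_⟩⟩
  · rintro ⟨⟨⟨a,b⟩,h1⟩, ⟨⟨c,d⟩,h2⟩⟩
    exact ⟨⟨(a,c),(b,d)⟩, Prod.ext h1 h2⟩
  · rintro ⟨⟨⟨a,c⟩,⟨b,d⟩⟩, h⟩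
    exact ⟨⟨⟨a,b⟩, congrArg Prod.fst h⟩, ⟨⟨c,d⟩, congrArg Prod.snd h⟩⟩
  · rintro ⟨⟨⟨a,b⟩,h1⟩, ⟨⟨c,d⟩,h2⟩⟩; rfl
  · rintro ⟨⟨⟨a,c⟩,⟨b,d⟩⟩, h⟩; rfl
  · rintro ⟨⟨⟨a,b⟩,h1⟩, ⟨⟨c,d⟩,h2⟩⟩; rfl
  · rintro ⟨⟨⟨a,b⟩,h1⟩, ⟨⟨c,d⟩,h2⟩⟩; rfl
end

section
/- For oriented graphs Γ and Δ, given vertices x, y in Γ, vertices v, w in Δ, a nonnegative integer n, and a signature σ ∈ {±1}ⁿ, there is a bijection between the set of paths of signature σ from (x,v) to (y,w) in the underlying graph of Γ ⊗ Δ and the set of pairs (q, r) where q is a path of signature σ from x to y in the underlying graph of Γ and r is a path of signature σ from v to w in the underlying graph of Δ. -/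
namespace OGraph

/-- Paths in the underlying non-oriented graph of an oriented graph, indexed by their
signature `σ : List Bool` (`true` = +1, an edge of `G` traversed positively;
`false` = −1, a formal inverse edge), together with initial and final vertices. -/
inductive SPath (G : OGraph) : List Bool → G.V → G.V → Type
  | nil (v : G.V) : SPath G [] v v
  | fwd {σ : List Bool} {z : G.V} (e : G.E) (p : SPath G σ (G.τ e) z) :
      SPath G (true :: σ) (G.ι e) z
  | bwd {σ : List Bool} {z : G.V} (e : G.E) (p : SPath G σ (G.ι e) z) :
      SPath G (false :: σ) (G.τ e) z

end OGraph

/-! An edge of `G ⊗ H` is a pair of edges, and traversing it forwards (backwards) traverses both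
components forwards (backwards). Hence a path of signature `σ` in `G ⊗ H` unzips into two
coordinate paths of the same signature `σ`, and two paths of a common signature zip back into
one path of `G ⊗ H`; the two constructions are mutually inverse. -/

namespace OGraph.SPath

variable {G H : OGraph}

def unzip : ∀ {σ : List Bool} {a b : (G.tensor H).V},
    (G.tensor H).SPath σ a b → G.SPath σ a.1 b.1 × H.SPath σ a.2 b.2
  | _, _, _, .nil u => (.nil u.1, .nil u.2)
  | _, _, _, .fwd e p => ((unzip p).1.fwd e.1, (unzip p).2.fwd e.2)
  | _, _, _, .bwd e p => ((unzip p).1.bwd e.1, (unzip p).2.bwd e.2)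

def zip : ∀ {σ : List Bool} {a₁ b₁ : G.V} {a₂ b₂ : H.V},
    G.SPath σ a₁ b₁ → H.SPath σ a₂ b₂ → (G.tensor H).SPath σ (a₁, a₂) (b₁, b₂)
  | _, _, _, _, _, .nil u₁, .nil u₂ => .nil (G := G.tensor H) (u₁, u₂)
  | _, _, _, _, _, .fwd e₁ p₁, .fwd e₂ p₂ => .fwd (e₁, e₂) (zip p₁ p₂)
  | _, _, _, _, _, .bwd e₁ p₁, .bwd e₂ p₂ => .bwd (e₁, e₂) (zip p₁ p₂)

theorem unzip_zip : ∀ {σ : List Bool} {a₁ b₁ : G.V} {a₂ b₂ : H.V}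
    (p₁ : G.SPath σ a₁ b₁) (p₂ : H.SPath σ a₂ b₂), unzip (zip p₁ p₂) = (p₁, p₂)
  | _, _, _, _, _, .nil _, .nil _ => rfl
  | _, _, _, _, _, .fwd e₁ p₁, .fwd e₂ p₂ =>
      congrArg (Prod.map (fwd e₁) (fwd e₂)) (unzip_zip p₁ p₂)
  | _, _, _, _, _, .bwd e₁ p₁, .bwd e₂ p₂ =>
      congrArg (Prod.map (bwd e₁) (bwd e₂)) (unzip_zip p₁ p₂)

theorem zip_unzip : ∀ {σ : List Bool} {a b : (G.tensor H).V}
    (p : (G.tensor H).SPath σ a b), zip (unzip p).1 (unzip p).2 = p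
  | _, _, _, .nil _ => rfl
  | _, _, _, .fwd e p => congrArg (fwd e) (zip_unzip p)
  | _, _, _, .bwd e p => congrArg (bwd e) (zip_unzip p)

def tensorEquiv (x y : G.V) (v w : H.V) (σ : List Bool) :
    (G.tensor H).SPath σ (x, v) (y, w) ≃ G.SPath σ x y × H.SPath σ v w where
  toFun := unzip
  invFun p := zip p.1 p.2
  left_inv := zip_unzip
  right_inv p := unzip_zip p.1 p.2

end OGraph.SPath

/-- For oriented graphs `G`, `H`, vertices `x y : G.V`, `v w : H.V`
and a signature `σ ∈ {±1}ⁿ`, the paths of signature `σ` from `(x,v)` to `(y,w)` in the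
underlying graph of `G ⊗ H` are in bijection with pairs of a path of signature `σ`
from `x` to `y` in `G` and one from `v` to `w` in `H`. -/
theorem tensor_path_bijection (G H : OGraph) (x y : G.V) (v w : H.V) (σ : List Bool) :
    Nonempty ((G.tensor H).SPath σ (x, v) (y, w) ≃ (G.SPath σ x y × H.SPath σ v w)) := by
  exact ⟨OGraph.SPath.tensorEquiv x y v w σ⟩
end

section
/- Let Γ be a connected oriented graph and M ≥ 1 (or M = ∞). Then all connected components of the tensor product Γ ⊗ C_M are isomorphic as oriented graphs, where C_M is the oriented cycle of length M (or the oriented bi-infinite line when M = ∞). -/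
namespace OGraph

/-- Weak adjacency: `u` and `v` are joined by an edge in some direction. -/
def Adj (G : OGraph) (u v : G.V) : Prop :=
  (∃ e, G.ι e = u ∧ G.τ e = v) ∨ (∃ e, G.ι e = v ∧ G.τ e = u)

/-- Weak reachability. -/
def Reach (G : OGraph) : G.V → G.V → Prop := Relation.ReflTransGen G.Adj

/-- Weak connectedness. -/
def Connected (G : OGraph) : Prop := ∀ u v, G.Reach u v

/-- The connected component of a vertex, as an oriented graph. -/
def component (G : OGraph) (v : G.V) : OGraph where
  V := {w // G.Reach v w}
  E := {e // G.Reach v (G.ι e)}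
  ι e := ⟨G.ι e.1, e.2⟩
  τ e := ⟨G.τ e.1, e.2.tail (Or.inl ⟨e.1, rfl, rfl⟩)⟩

end OGraph

/-- Derangement of a signature: number of positive steps minus number of negative steps. -/
def der (σ : List Bool) : ℤ := (σ.count true : ℤ) - (σ.count false : ℤ)

/-- The oriented cycle of length `M` (for `M = 0`, `ZMod 0 = ℤ` and this is the
oriented bi-infinite line, corresponding to `M = ∞`). -/
@[reducible] def cycle (M : ℕ) : OGraph where
  V := ZMod M
  E := ZMod M
  ι i := i
  τ i := i + 1

/-! Shifting the cycle coordinate by a constant is an automorphism of `Γ ⊗ C_M`, and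
automorphisms carry components onto components. Since `Γ` is connected, every component of
`Γ ⊗ C_M` meets every fibre `{w} × C_M`: a path from `v` to `w` in `Γ` lifts to `Γ ⊗ C_M`,
each step changing the cycle coordinate by `±1`. So the component of `(v, i)` is the component
of some `(w, d)`, which the shift by `j - d` maps onto the component of `(w, j)`. -/

namespace OGraph

theorem Adj.symm {G : OGraph} {u v : G.V} (h : G.Adj u v) : G.Adj v u := Or.symm h

theorem Reach.symm {G : OGraph} {u v : G.V} (h : G.Reach u v) : G.Reach v u := by
  induction h with
  | refl => exact .refl
  | tail _ hadj ih => exact ih.head hadj.symm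

namespace Iso

variable {G H K : OGraph}

def symm (f : Iso G H) : Iso H G where
  fV := f.fV.symm
  fE := f.fE.symm
  hι e := by rw [Equiv.eq_symm_apply, ← f.hι, Equiv.apply_symm_apply]
  hτ e := by rw [Equiv.eq_symm_apply, ← f.hτ, Equiv.apply_symm_apply]

def trans (f : Iso G H) (g : Iso H K) : Iso G K where
  fV := f.fV.trans g.fV
  fE := f.fE.trans g.fE
  hι e := by simp only [Equiv.trans_apply, g.hι, f.hι]
  hτ e := by simp only [Equiv.trans_apply, g.hτ, f.hτ]

theorem map_adj (f : Iso G H) {u w : G.V} (h : G.Adj u w) : H.Adj (f.fV u) (f.fV w) := by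
  rcases h with ⟨e, rfl, rfl⟩ | ⟨e, rfl, rfl⟩
  · exact Or.inl ⟨f.fE e, f.hι e, f.hτ e⟩
  · exact Or.inr ⟨f.fE e, f.hι e, f.hτ e⟩

theorem map_reach (f : Iso G H) {u w : G.V} (h : G.Reach u w) : H.Reach (f.fV u) (f.fV w) :=
  Relation.ReflTransGen.lift f.fV (fun _ _ => f.map_adj) _ _ h

theorem reach_iff (f : Iso G H) (u w : G.V) : H.Reach (f.fV u) (f.fV w) ↔ G.Reach u w := by
  refine ⟨fun h => ?_, f.map_reach⟩
  simpa only [symm, Equiv.symm_apply_apply] using f.symm.map_reach h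

def component (f : Iso G H) (v : G.V) : Iso (G.component v) (H.component (f.fV v)) where
  fV := f.fV.subtypeEquiv fun w => (f.reach_iff v w).symm
  fE := f.fE.subtypeEquiv fun e => by rw [f.hι e]; exact (f.reach_iff v (G.ι e)).symm
  hι e := Subtype.ext (f.hι e.1)
  hτ e := Subtype.ext (f.hτ e.1)

end Iso

def componentIsoOfReach (G : OGraph) {p q : G.V} (h : G.Reach p q) :
    Iso (G.component p) (G.component q) where
  fV := Equiv.subtypeEquivRight fun _ => ⟨h.symm.trans, h.trans⟩
  fE := Equiv.subtypeEquivRight fun _ => ⟨h.symm.trans, h.trans⟩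
  hι _ := rfl
  hτ _ := rfl

def tensorCycleShift (G : OGraph) (M : ℕ) (c : ZMod M) :
    Iso (G.tensor (cycle M)) (G.tensor (cycle M)) where
  fV := (Equiv.refl G.V).prodCongr (Equiv.addRight c)
  fE := (Equiv.refl G.E).prodCongr (Equiv.addRight c)
  hι _ := rfl
  hτ _ := Prod.ext rfl (add_right_comm _ _ _)

theorem exists_reach_tensor_cycle (G : OGraph) (M : ℕ) {v w : G.V} (h : G.Reach v w)
    (i : ZMod M) : ∃ d, (G.tensor (cycle M)).Reach (v, i) (w, d) := by
  induction h with
  | refl => exact ⟨i, .refl⟩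
  | tail _ hadj ih =>
    obtain ⟨d, hd⟩ := ih
    rcases hadj with ⟨e, rfl, rfl⟩ | ⟨e, rfl, rfl⟩
    · exact ⟨d + 1, hd.tail (Or.inl ⟨(e, d), rfl, rfl⟩)⟩
    · exact ⟨d - 1, hd.tail (Or.inr ⟨(e, d - 1), rfl, Prod.ext rfl (sub_add_cancel d 1)⟩)⟩

end OGraph

/-- If `Γ` is a connected oriented graph and `C_M` is the oriented
cycle of length `M` (the oriented line `ℤ` when `M = 0`, encoding `M = ∞`), then all
connected components of `Γ ⊗ C_M` are isomorphic as oriented graphs. -/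
theorem components_of_tensor_cycle_iso (G : OGraph) (hG : G.Connected) (M : ℕ)
    (p q : (G.tensor (cycle M)).V) :
    Nonempty (OGraph.Iso ((G.tensor (cycle M)).component p) ((G.tensor (cycle M)).component q)) := by
  obtain ⟨v, i⟩ := p
  obtain ⟨w, j⟩ := q
  obtain ⟨d, hd⟩ := OGraph.exists_reach_tensor_cycle G M (hG v w) i
  have hshift : (OGraph.tensorCycleShift G M (j - d)).fV (w, d) = (w, j) :=
    Prod.ext rfl (add_sub_cancel d j)
  exact ⟨(OGraph.componentIsoOfReach _ hd).trans
    (hshift ▸ (OGraph.tensorCycleShift G M (j - d)).component (w, d))⟩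
end

section
/- Let Γ be a connected, locally finite oriented graph, M ≥ 1, and v a vertex of Γ. The marked oriented graph (Γ, v) is isomorphic (as marked oriented graph) to the connected component of (v, 0) in Γ ⊗ C_M if and only if the derangement of every closed path in the underlying graph of Γ is congruent to 0 modulo M. -/
/-- Every closed path in the underlying graph of `G` has derangement ≡ 0 (mod M). -/
def DerZeroMod (G : OGraph) (M : ℕ) : Prop :=
  ∀ (σ : List Bool) (v : G.V), Nonempty (G.SPath σ v v) → ((der σ : ZMod M) = 0)

/-! The second coordinate of `Γ ⊗ C_M` is a `ZMod M`-valued potential, i.e. a function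
increasing by `1` along every edge, so an isomorphism `Γ ≅ component` pulls it back to a
potential on `Γ`; along any path a potential grows by the derangement, so closed paths have
derangement `0` mod `M`. Conversely, if all closed paths have derangement `0` mod `M`, then
in the connected graph `Γ` the derangement of a path from `v` to `w`, read mod `M`, depends
only on `w` and defines a potential `φ` with `φ v = 0`. The component of `(v, 0)` is then
exactly the graph `{(w, φ w)}` of `φ`, which `w ↦ (w, φ w)` identifies with `Γ`. -/

theorem der_nil : der [] = 0 := rfl

theorem der_cons_true (σ : List Bool) : der (true :: σ) = der σ + 1 := by
  simp [der]; ring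

theorem der_cons_false (σ : List Bool) : der (false :: σ) = der σ - 1 := by
  simp [der]; ring

theorem der_append (σ σ' : List Bool) : der (σ ++ σ') = der σ + der σ' := by
  simp [der, List.count_append]; ring

namespace OGraph

variable {G : OGraph}

def IsPotential (G : OGraph) {A : Type*} [AddCommGroupWithOne A] (φ : G.V → A) : Prop :=
  ∀ e, φ (G.τ e) = φ (G.ι e) + 1

namespace SPath

def append : ∀ {σ σ' : List Bool} {a b c : G.V},
    G.SPath σ a b → G.SPath σ' b c → G.SPath (σ ++ σ') a c
  | _, _, _, _, _, .nil _, q => q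
  | _, _, _, _, _, .fwd e p, q => .fwd e (p.append q)
  | _, _, _, _, _, .bwd e p, q => .bwd e (p.append q)

theorem exists_reverse {σ : List Bool} {a b : G.V} (p : G.SPath σ a b) :
    ∃ σ', Nonempty (G.SPath σ' b a) ∧ der σ' = -der σ := by
  induction p with
  | nil a => exact ⟨[], ⟨.nil a⟩, rfl⟩
  | fwd e _ ih =>
    obtain ⟨σ', ⟨q⟩, hσ'⟩ := ih
    exact ⟨σ' ++ [false], ⟨q.append (.bwd e (.nil _))⟩, by
      rw [der_append, der_cons_false, der_cons_true, hσ', der_nil]; ring⟩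
  | bwd e _ ih =>
    obtain ⟨σ', ⟨q⟩, hσ'⟩ := ih
    exact ⟨σ' ++ [true], ⟨q.append (.fwd e (.nil _))⟩, by
      rw [der_append, der_cons_true, der_cons_false, hσ', der_nil]; ring⟩

theorem potential_eq {A : Type*} [AddCommGroupWithOne A] {φ : G.V → A} (hφ : G.IsPotential φ)
    {σ : List Bool} {a b : G.V} (p : G.SPath σ a b) : φ b = φ a + der σ := by
  induction p with
  | nil => simp [der_nil]
  | fwd e _ ih => rw [ih, hφ e, der_cons_true]; push_cast; abel
  | bwd e _ ih => rw [ih, hφ e, der_cons_false]; push_cast; abel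

end SPath

theorem Reach.exists_spath {a b : G.V} (h : G.Reach a b) : ∃ σ, Nonempty (G.SPath σ a b) := by
  induction h using Relation.ReflTransGen.head_induction_on with
  | refl => exact ⟨[], ⟨.nil b⟩⟩
  | head hadj _ ih =>
    obtain ⟨σ, ⟨p⟩⟩ := ih
    rcases hadj with ⟨e, rfl, rfl⟩ | ⟨e, rfl, rfl⟩
    · exact ⟨true :: σ, ⟨.fwd e p⟩⟩
    · exact ⟨false :: σ, ⟨.bwd e p⟩⟩

theorem IsPotential.derZeroMod {M : ℕ} {φ : G.V → ZMod M} (hφ : G.IsPotential φ) :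
    DerZeroMod G M :=
  fun _ _ ⟨p⟩ => left_eq_add.mp (p.potential_eq hφ)

theorem Iso.isPotential_comp {H : OGraph} {A : Type*} [AddCommGroupWithOne A] (f : Iso G H)
    {φ : H.V → A} (hφ : H.IsPotential φ) : G.IsPotential (φ ∘ f.fV) := by
  intro e
  simp only [Function.comp_apply, ← f.hι, ← f.hτ, hφ (f.fE e)]

theorem isPotential_snd_component (M : ℕ) (x : (G.tensor (cycle M)).V) :
    ((G.tensor (cycle M)).component x).IsPotential (fun y => y.1.2) :=
  fun _ => rfl

theorem _root_.DerZeroMod.der_eq {M : ℕ} (h : DerZeroMod G M) {σ σ' : List Bool} {a b : G.V}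
    (p : G.SPath σ a b) (q : G.SPath σ' a b) : (der σ : ZMod M) = der σ' := by
  obtain ⟨τ, ⟨q'⟩, hτ⟩ := q.exists_reverse
  have hclosed := h _ a ⟨p.append q'⟩
  rw [der_append, hτ] at hclosed
  push_cast at hclosed
  linear_combination hclosed

theorem _root_.DerZeroMod.exists_potential {M : ℕ} (hG : G.Connected) (h : DerZeroMod G M)
    (v : G.V) :
    ∃ φ : G.V → ZMod M, G.IsPotential φ ∧ φ v = 0 := by
  choose σ p using fun w => (hG v w).exists_spath
  refine ⟨fun w => der (σ w), fun e => ?_, ?_⟩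
  · obtain ⟨p₁⟩ := p (G.ι e)
    obtain ⟨p₂⟩ := p (G.τ e)
    show (der (σ (G.τ e)) : ZMod M) = der (σ (G.ι e)) + 1
    rw [h.der_eq p₂ (p₁.append (.fwd e (.nil _))), der_append, der_cons_true, der_nil]
    push_cast
    ring
  · obtain ⟨p₀⟩ := p v
    exact (h.der_eq p₀ (.nil v)).trans Int.cast_zero

variable {M : ℕ} {φ : G.V → ZMod M}

theorem reach_tensor_cycle_iff (hG : G.Connected) (hφ : G.IsPotential φ) {v : G.V}
    (hφv : φ v = 0) (w : G.V) (i : ZMod M) :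
    (G.tensor (cycle M)).Reach (v, 0) (w, i) ↔ i = φ w := by
  rw [← hφv]
  constructor
  · intro hr
    suffices ∀ x, (G.tensor (cycle M)).Reach (v, φ v) x → x.2 = φ x.1 from this _ hr
    intro x hx
    induction hx with
    | refl => rfl
    | tail _ hadj ih =>
      rcases hadj with ⟨⟨e, j⟩, rfl, rfl⟩ | ⟨⟨e, j⟩, rfl, rfl⟩
      · exact (congrArg (· + 1) ih).trans (hφ e).symm
      · exact add_right_cancel (ih.trans (hφ e))
  · rintro rfl
    refine (hG v w).lift (fun x => (x, φ x)) fun a b hab => ?_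
    rcases hab with ⟨e, rfl, rfl⟩ | ⟨e, rfl, rfl⟩
    · exact Or.inl ⟨(e, φ (G.ι e)), rfl, Prod.ext rfl (hφ e).symm⟩
    · exact Or.inr ⟨(e, φ (G.ι e)), rfl, Prod.ext rfl (hφ e).symm⟩

def isoComponentOfPotential (hG : G.Connected) (hφ : G.IsPotential φ) {v : G.V}
    (hφv : φ v = 0) : Iso G ((G.tensor (cycle M)).component (v, 0)) where
  fV :=
    { toFun w := ⟨(w, φ w), (reach_tensor_cycle_iff hG hφ hφv w _).mpr rfl⟩
      invFun x := x.1.1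
      left_inv _ := rfl
      right_inv := fun ⟨(w, i), hr⟩ =>
        Subtype.ext (Prod.ext rfl ((reach_tensor_cycle_iff hG hφ hφv w i).mp hr).symm) }
  fE :=
    { toFun e := ⟨(e, φ (G.ι e)), (reach_tensor_cycle_iff hG hφ hφv (G.ι e) _).mpr rfl⟩
      invFun x := x.1.1
      left_inv _ := rfl
      right_inv := fun ⟨(e, i), hr⟩ =>
        Subtype.ext (Prod.ext rfl ((reach_tensor_cycle_iff hG hφ hφv (G.ι e) i).mp hr).symm) }
  hι _ := rfl
  hτ e := Subtype.ext (Prod.ext rfl (hφ e).symm)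

end OGraph

theorem marked_iso_component_tensor_cycle_iff_general (G : OGraph) (hG : G.Connected)
    (M : ℕ) (v : G.V) :
    (∃ i : OGraph.Iso G ((G.tensor (cycle M)).component (v, (0 : ZMod M))),
        i.fV v = ⟨(v, (0 : ZMod M)), Relation.ReflTransGen.refl⟩) ↔ DerZeroMod G M := by
  constructor
  · rintro ⟨f, -⟩
    exact (f.isPotential_comp (OGraph.isPotential_snd_component M _)).derZeroMod
  · intro h
    obtain ⟨φ, hφ, hφv⟩ := h.exists_potential hG v
    exact ⟨OGraph.isoComponentOfPotential hG hφ hφv, Subtype.ext (Prod.ext rfl hφv)⟩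

/-- For a connected, locally finite oriented graph `Γ`, `M ≥ 1` and a
vertex `v`, the marked graph `(Γ, v)` is isomorphic as a marked oriented graph to the
connected component of `(v, 0)` in `Γ ⊗ C_M` iff every closed path in the underlying
graph of `Γ` has derangement divisible by `M`. -/
theorem marked_iso_component_tensor_cycle_iff (G : OGraph) (hG : G.Connected)
    (hloc₁ : ∀ v : G.V, Finite {e : G.E // G.ι e = v})
    (hloc₂ : ∀ v : G.V, Finite {e : G.E // G.τ e = v})
    (M : ℕ) (hM : 1 ≤ M) (v : G.V) :
    (∃ i : OGraph.Iso G ((G.tensor (cycle M)).component (v, (0 : ZMod M))),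
        i.fV v = ⟨(v, (0 : ZMod M)), Relation.ReflTransGen.refl⟩) ↔ DerZeroMod G M :=
  marked_iso_component_tensor_cycle_iff_general G hG M v
end

section
/- Let G = ⟨X | R⟩ be a group presentation such that for every relator r ∈ R the total exponent exp_X(r) is congruent to 0 modulo M. Then the oriented Cayley graph Cay(G, X) is isomorphic, as a marked labeled oriented graph, to any connected component of Cay(G, X) ⊗ C_M. -/
/-- An oriented graph whose edges carry labels in `X`. -/
structure LGraph (X : Type) extends OGraph where
  lab : E → X

/-- Strong (label-preserving) isomorphism of labeled oriented graphs. -/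
structure LIso {X : Type} (G H : LGraph X) extends OGraph.Iso G.toOGraph H.toOGraph where
  hlab : ∀ e, H.lab (fE e) = G.lab e

/-- Tensor product of a labeled graph with the cycle `C_M`, the labels being inherited
from the first factor. -/
def LGraph.tensorC {X : Type} (G : LGraph X) (M : ℕ) : LGraph X where
  toOGraph := G.toOGraph.tensor (cycle M)
  lab e := G.lab e.1

/-- The connected component of a vertex of a labeled graph. -/
def LGraph.component {X : Type} (G : LGraph X) (v : G.V) : LGraph X where
  toOGraph := G.toOGraph.component v
  lab e := G.lab e.1

/-- The labeled oriented Cayley graph of a group `G` with generators indexed by `f : X → G`: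
an edge labeled `x` from `g` to `g * f x`. -/
def cayley (G : Type) [Group G] {X : Type} (f : X → G) : LGraph X where
  V := G
  E := G × X
  ι e := e.1
  τ e := e.1 * f e.2
  lab e := e.2

/-- The labeled oriented Schreier graph of `G` with respect to a subgroup `H` and
generators `f : X → G`: vertices are right cosets `Hg`, with an edge labeled `x`
from `Hg` to `Hg·(f x)`. -/
def schreier (G : Type) [Group G] (H : Subgroup G) {X : Type} (f : X → G) : LGraph X where
  V := Quotient (QuotientGroup.rightRel H)
  E := Quotient (QuotientGroup.rightRel H) × X
  ι e := e.1
  τ e := Quotient.map (fun g => g * f e.2)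
    (fun a b h => by
      have h' := QuotientGroup.rightRel_apply.mp h
      exact QuotientGroup.rightRel_apply.mpr (by simpa [mul_assoc] using h')) e.1
  lab e := e.2

/-!
The relator condition says that the exponent sum mod `M` descends to a homomorphism
`ψ : G → ℤ/Mℤ` with `ψ x = 1` on generators. Every edge of `Cay(G, X) ⊗ C_M` adds `1` both to
the cycle coordinate `z` and to `ψ g`, so the level `z - ψ g` is constant on components;
conversely, since `X` generates `G`, vertices of equal level are joined by a path. The component
of `p` is therefore the graph of `g ↦ (g, ψ g + c)`, a copy of `Cay(G, X)`.
-/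

namespace OGraph

theorem Reach.apply_eq_of_forall_adj {G : OGraph} {α : Type*} (φ : G.V → α)
    (hφ : ∀ u v, G.Adj u v → φ u = φ v) {u v : G.V} (huv : G.Reach u v) : φ u = φ v := by
  induction huv with
  | refl => rfl
  | tail _ hadj ih => exact ih.trans (hφ _ _ hadj)

end OGraph

namespace LGraph

open Multiplicative

variable {G : Type} [Group G] {X : Type} {f : X → G} {M : ℕ}
  (ψ : G →* Multiplicative (ZMod M))

def tensorCLevel (w : G × ZMod M) : ZMod M := w.2 - toAdd (ψ w.1)

variable {ψ}

theorem tensorCLevel_eq_of_adj (hψ : ∀ x, ψ (f x) = ofAdd 1) {u v : G × ZMod M}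
    (huv : ((cayley G f).tensorC M).Adj u v) : tensorCLevel ψ u = tensorCLevel ψ v := by
  have step : ∀ e : (G × X) × ZMod M,
      tensorCLevel ψ (e.1.1, e.2) = tensorCLevel ψ (e.1.1 * f e.1.2, e.2 + 1) := by
    intro e
    simp only [tensorCLevel, map_mul, hψ, toAdd_mul, toAdd_ofAdd]
    ring
  rcases huv with ⟨e, rfl, rfl⟩ | ⟨e, rfl, rfl⟩
  · exact step e
  · exact (step e).symm

theorem reach_tensorC_mul (hψ : ∀ x, ψ (f x) = ofAdd 1)
    (hgen : Subgroup.closure (Set.range f) = ⊤) (g a : G) (z : ZMod M) :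
    ((cayley G f).tensorC M).Reach (g, z) (g * a, z + toAdd (ψ a)) := by
  have ha : a ∈ Subgroup.closure (Set.range f) := hgen ▸ Subgroup.mem_top a
  induction ha using Subgroup.closure_induction_right with
  | one =>
    simp only [mul_one, map_one, toAdd_one, add_zero]
    exact .refl
  | mul_right b _ y hy ih =>
    obtain ⟨x, rfl⟩ := hy
    refine ih.tail (Or.inl ⟨((g * b, x), z + toAdd (ψ b)), rfl, ?_⟩)
    simp [tensorC, OGraph.tensor, cayley, hψ, mul_assoc, add_assoc]
  | mul_inv_cancel b _ y hy ih =>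
    obtain ⟨x, rfl⟩ := hy
    refine ih.tail (Or.inr ⟨((g * (b * (f x)⁻¹), x), z + toAdd (ψ (b * (f x)⁻¹))), rfl, ?_⟩)
    simp only [cayley, tensorC, OGraph.tensor, map_mul, map_inv, hψ, toAdd_mul, toAdd_inv,
      toAdd_ofAdd, mul_assoc, inv_mul_cancel, mul_one, Prod.mk.injEq, true_and]
    ring

theorem reach_tensorC_iff (hψ : ∀ x, ψ (f x) = ofAdd 1)
    (hgen : Subgroup.closure (Set.range f) = ⊤) (p w : G × ZMod M) :
    ((cayley G f).tensorC M).Reach p w ↔ tensorCLevel ψ w = tensorCLevel ψ p := by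
  refine ⟨fun hpw => (hpw.apply_eq_of_forall_adj _ fun _ _ => tensorCLevel_eq_of_adj hψ).symm,
    fun hlevel => ?_⟩
  obtain ⟨g, z⟩ := p
  obtain ⟨g', z'⟩ := w
  have hgg' := reach_tensorC_mul hψ hgen g (g⁻¹ * g') z
  rwa [mul_inv_cancel_left, show z + toAdd (ψ (g⁻¹ * g')) = z' by
    simp only [tensorCLevel] at hlevel
    simp only [map_mul, map_inv, toAdd_mul, toAdd_inv]
    linear_combination -hlevel] at hgg'

theorem reach_tensorC_iff_eq_add (hψ : ∀ x, ψ (f x) = ofAdd 1)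
    (hgen : Subgroup.closure (Set.range f) = ⊤) (p : G × ZMod M) (g : G) (z : ZMod M) :
    ((cayley G f).tensorC M).Reach p (g, z) ↔ z = toAdd (ψ g) + tensorCLevel ψ p :=
  (reach_tensorC_iff hψ hgen p (g, z)).trans sub_eq_iff_eq_add'

def cayleyIsoComponentTensorC (hψ : ∀ x, ψ (f x) = ofAdd 1)
    (hgen : Subgroup.closure (Set.range f) = ⊤) (p : ((cayley G f).tensorC M).V) :
    LIso (cayley G f) (((cayley G f).tensorC M).component p) where
  fV :=
    { toFun g := ⟨(g, _), (reach_tensorC_iff_eq_add hψ hgen p g _).2 rfl⟩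
      invFun w := w.1.1
      left_inv _ := rfl
      right_inv := fun ⟨(g, z), hw⟩ =>
        Subtype.ext (Prod.ext rfl ((reach_tensorC_iff_eq_add hψ hgen p g z).1 hw).symm) }
  fE :=
    { toFun e := ⟨(e, _), (reach_tensorC_iff_eq_add hψ hgen p e.1 _).2 rfl⟩
      invFun e := e.1.1
      left_inv _ := rfl
      right_inv := fun ⟨((g, x), z), he⟩ =>
        Subtype.ext (Prod.ext rfl ((reach_tensorC_iff_eq_add hψ hgen p g z).1 he).symm) }
  hι _ := rfl
  hτ e := Subtype.ext <| Prod.ext rfl <| by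
    change toAdd (ψ e.1) + _ + 1 = toAdd (ψ (e.1 * f e.2)) + _
    rw [map_mul, hψ, toAdd_mul, toAdd_ofAdd, add_right_comm]
  hlab _ := rfl

theorem cayleyIsoComponentTensorC_fV_fst (hψ : ∀ x, ψ (f x) = ofAdd 1)
    (hgen : Subgroup.closure (Set.range f) = ⊤) (p : ((cayley G f).tensorC M).V) :
    (cayleyIsoComponentTensorC hψ hgen p).fV p.1 = ⟨p, .refl⟩ :=
  Subtype.ext (Prod.ext rfl (add_sub_cancel _ _))

end LGraph

/-- Let `G = ⟨X | R⟩` be a presentation in which every relator has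
total exponent ≡ 0 (mod M) (expressed by saying that the lift of `x ↦ 1 ∈ ℤ/Mℤ` kills
every relator). Then the oriented Cayley graph `Cay(G, X)` is isomorphic, as a marked
labeled oriented graph, to any connected component of `Cay(G, X) ⊗ C_M` (marked at the
group element underlying the chosen basepoint). -/
theorem cayley_iso_component_tensor_cycle {X : Type} (R : Set (FreeGroup X)) (M : ℕ)
    (h : ∀ r ∈ R, FreeGroup.lift (fun _ : X => Multiplicative.ofAdd (1 : ZMod M)) r = 1)
    (p : ((cayley (PresentedGroup R) (PresentedGroup.of (rels := R))).tensorC M).V) :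
    ∃ i : LIso (cayley (PresentedGroup R) (PresentedGroup.of (rels := R)))
        (((cayley (PresentedGroup R) (PresentedGroup.of (rels := R))).tensorC M).component p),
      i.fV p.1 = ⟨p, Relation.ReflTransGen.refl⟩ :=
  have hψ : ∀ x, PresentedGroup.toGroup h (.of x) = Multiplicative.ofAdd 1 :=
    fun _ => PresentedGroup.toGroup.of h
  ⟨_, LGraph.cayleyIsoComponentTensorC_fV_fst hψ (PresentedGroup.closure_range_of R) p⟩
end

section
/- In the lamplighter group L_k = (ℤ/kℤ) ≀ ℤ with presentation ⟨b, c | cᵏ, [c, bⁿcb⁻ⁿ] for n ∈ ℕ⟩, the set X_k = {c^i b : 0 ≤ i ≤ k−1} generates L_k, and every relator in the presentation ⟨X_k | (c̄₁b⁻¹)ᵏ, (c̄₁b⁻¹)ⁱb c̄ᵢ⁻¹, [c̄₁b⁻¹, bⁿc̄₁b⁻ⁿ⁻¹]⟩ (where c̄ᵢ = cⁱb) has total exponent 0 with respect to X_k. -/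
open scoped commutatorElement

/-- Relators of the standard presentation `⟨b, c | cᵏ, [c, bⁿcb⁻ⁿ]⟩` of the lamplighter
group `ℤ/kℤ ≀ ℤ`, over the alphabet `Bool` with `b = of true` and `c = of false`. -/
def llRels (k : ℕ) : Set (FreeGroup Bool) :=
  {(FreeGroup.of false) ^ k} ∪
    ⋃ n : ℕ, {⁅FreeGroup.of false,
      (FreeGroup.of true) ^ n * FreeGroup.of false * ((FreeGroup.of true)⁻¹) ^ n⁆}

/-- The lamplighter group `L_k = ℤ/kℤ ≀ ℤ`, via its standard presentation. -/
abbrev Lamplighter (k : ℕ) := PresentedGroup (llRels k)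

/-- The generator `b` (the shift). -/
def llb (k : ℕ) : Lamplighter k := PresentedGroup.of true

/-- The generator `c` (the lamp at position 0). -/
def llc (k : ℕ) : Lamplighter k := PresentedGroup.of false

/-- The total-exponent homomorphism on words over the alphabet `ZMod k`
(standing for the generating set `X_k = {c̄ᵢ = cⁱb}`), sending every generator to `1 ∈ ℤ`. -/
def expX (k : ℕ) : FreeGroup (ZMod k) →* Multiplicative ℤ :=
  FreeGroup.lift fun _ => Multiplicative.ofAdd 1

/-- The word `c̄₁ b⁻¹` over the alphabet `ZMod k` (with the letter `i` standing for
`c̄ᵢ = cⁱb`, so `b = c̄₀`). -/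
def wC (k : ℕ) : FreeGroup (ZMod k) := FreeGroup.of 1 * (FreeGroup.of 0)⁻¹

/-! The exponent sum takes values in the abelian group `ℤ`, so it kills every commutator, and each
of the other relators has as many letters as inverse letters. The elements `b = c⁰b` and
`cb = c¹b` of `X_k` already generate `L_k`, since `c = (cb)b⁻¹`. -/

theorem Subgroup.closure_eq_top_of_mem_of_mul_mem {G : Type*} [Group G] {S : Set G} {b c : G}
    (hbc : Subgroup.closure {b, c} = ⊤) (hb : b ∈ S) (hcb : c * b ∈ S) :
    Subgroup.closure S = ⊤ := by
  rw [eq_top_iff, ← hbc, Subgroup.closure_le, Set.insert_subset_iff, Set.singleton_subset_iff]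
  refine ⟨Subgroup.subset_closure hb, ?_⟩
  simpa using mul_mem (Subgroup.subset_closure hcb) (inv_mem (Subgroup.subset_closure hb))

theorem MonoidHom.map_commutatorElement_eq_one {G A : Type*} [Group G] [CommGroup A]
    (f : G →* A) (x y : G) : f ⁅x, y⁆ = 1 := by
  rw [map_commutatorElement, commutatorElement_eq_one_iff_mul_comm, mul_comm]

theorem lamplighter_closure_llb_llc (k : ℕ) : Subgroup.closure {llb k, llc k} = ⊤ := by
  rw [← PresentedGroup.closure_range_of]
  congr
  ext g
  constructor
  · rintro (rfl | rfl)
    exacts [⟨true, rfl⟩, ⟨false, rfl⟩]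
  · rintro ⟨_ | _, rfl⟩
    exacts [Or.inr rfl, Or.inl rfl]

theorem expX_of (k : ℕ) (i : ZMod k) : expX k (FreeGroup.of i) = Multiplicative.ofAdd 1 :=
  FreeGroup.lift_apply_of

theorem expX_wC (k : ℕ) : expX k (wC k) = 1 := by
  simp [wC, expX_of]

/-- In the lamplighter group `L_k = ℤ/kℤ ≀ ℤ` presented as
`⟨b, c | cᵏ, [c, bⁿcb⁻ⁿ]⟩`, the set `X_k = {cⁱb : 0 ≤ i ≤ k−1}` generates `L_k`, and
every relator of the presentation over `X_k` — namely `(c̄₁b⁻¹)ᵏ`, `(c̄₁b⁻¹)ⁱ b c̄ᵢ⁻¹`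
for `2 ≤ i ≤ k−1`, and `[c̄₁b⁻¹, bⁿ c̄₁ b⁻ⁿ⁻¹]` — has total exponent `0` with respect
to `X_k`. -/
theorem lamplighter_generators_and_exponents (k : ℕ) (hk : 2 ≤ k) :
    (Subgroup.closure (Set.range fun i : Fin k => (llc k) ^ (i : ℕ) * llb k) = ⊤) ∧
    (expX k ((wC k) ^ k) = 1) ∧
    (∀ i : ℕ, 2 ≤ i → i ≤ k - 1 →
      expX k ((wC k) ^ i * FreeGroup.of 0 * (FreeGroup.of (i : ZMod k))⁻¹) = 1) ∧
    (∀ n : ℕ,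
      expX k ⁅wC k, (FreeGroup.of (0 : ZMod k)) ^ n * FreeGroup.of (1 : ZMod k) *
        ((FreeGroup.of (0 : ZMod k))⁻¹) ^ (n + 1)⁆ = 1) := by
  refine ⟨?_, by simp [expX_wC], fun i _ _ => by simp [expX_wC, expX_of], fun n => ?_⟩
  · exact Subgroup.closure_eq_top_of_mem_of_mul_mem (lamplighter_closure_llb_llc k)
      ⟨⟨0, by omega⟩, by simp⟩ ⟨⟨1, by omega⟩, by simp⟩
  · exact (expX k).map_commutatorElement_eq_one _ _
end

section
/- For every k ≥ 2, M ≥ 1 (possibly ∞) and N ≥ 0, the oriented spider-web graph S_{k,N,M} is isomorphic, as a labeled oriented graph, to the tensor product B_{k,N} ⊗ C_M of the de Bruijn graph with the oriented cycle of length M. -/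
/-- The labeled de Bruijn graph `B_{k,N}`: vertices are words over `{0,…,k−1}`
(realized as `ZMod k`); the edge from `x₁…x_N` to `x₂…x_N y` carries the label `R_y = y`. -/
def deBruijnL (k N : ℕ) : LGraph (ZMod k) where
  V := Fin N → ZMod k
  E := (Fin N → ZMod k) × ZMod k
  ι e := e.1
  τ e := fun j => if h : (j : ℕ) + 1 < N then e.1 ⟨(j : ℕ) + 1, h⟩ else e.2
  lab e := e.2

/-- The labeled oriented spider-web graph `S_{k,N,M}`: vertices are pairs
`(x₁…x_N, i) ∈ {0,…,k−1}^N × ℤ/Mℤ`; for each symbol `y` there is an edge labeled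
`R_y = y` from `(x₁…x_N, i)` to `(x₂…x_N y, i+1)`.  (For `M = 0`, `ZMod 0 = ℤ` and
this is `S_{k,N,∞}`.) -/
def spider (k N M : ℕ) : LGraph (ZMod k) where
  V := (Fin N → ZMod k) × ZMod M
  E := ((Fin N → ZMod k) × ZMod M) × ZMod k
  ι e := e.1
  τ e := (fun j => if h : (j : ℕ) + 1 < N then e.1.1 ⟨(j : ℕ) + 1, h⟩ else e.2, e.1.2 + 1)
  lab e := e.2

/-- For every `k ≥ 2`, every `M` (with `M = 0` encoding `M = ∞`) and
every `N ≥ 0`, the oriented spider-web graph `S_{k,N,M}` is isomorphic, as a labeled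
oriented graph, to the tensor product `B_{k,N} ⊗ C_M` of the de Bruijn graph with the
oriented cycle of length `M`, the labels being inherited from `B_{k,N}`. -/
theorem spider_iso_deBruijn_tensor_cycle (k N M : ℕ) (hk : 2 ≤ k) :
    Nonempty (LIso (spider k N M) ((deBruijnL k N).tensorC M)) := by
  exact ⟨{
    fV := Equiv.refl _
    fE := { toFun := fun e => ((e.1.1, e.2), e.1.2)
            invFun := fun e => ((e.1.1, e.2), e.1.2)
            left_inv := fun _ => rfl
            right_inv := fun _ => rfl }
    hι := fun e => rfl
    hτ := fun e => rfl
    hlab := fun e => rfl }⟩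
end

section
/- For k ≥ 2, the map c̄_r · (x₁x₂x₃…) = ((x₁+r)(x₂+x₁)(x₃+x₂)…), with additions modulo k, defines a faithful action of the lamplighter group L_k = (ℤ/kℤ) ≀ ℤ by automorphisms on the rooted k-regular tree (vertices = finite strings over {0,…,k−1}), and this action is transitive on each level of the tree. -/
open scoped commutatorElement

/-- The action of the generator `c̄_r = cʳb` on finite strings over `{0,…,k−1}`
(realized as `ZMod k`): `c̄_r · (x₁x₂x₃…) = (x₁+r)(x₂+x₁)(x₃+x₂)…`, additions mod `k`. -/
def lampAct (k : ℕ) : ZMod k → List (ZMod k) → List (ZMod k)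
  | _, [] => []
  | r, x :: xs => (x + r) :: lampAct k x xs

/-!
Identify a string `x₁x₂…xₙ` over `ℤ/kℤ` with the power series `x₁ + x₂X + ⋯ + xₙXⁿ⁻¹` modulo
`Xⁿ`. Then `c̄_r` acts by `x ↦ (1 + X)x + r`, so `b` acts as multiplication by the unit `1 + X`,
`c` as translation by `1`, and the lamp `bⁱcb⁻ⁱ` as translation by `(1 + X)ⁱ`. Affine maps
`x ↦ ux + p` of `(ℤ/kℤ)⟦X⟧` commute with truncation, so they act on every level of the tree
compatibly with prefixes.

Every element of `L_k` is a lamp configuration `f ∈ (ℤ/kℤ)[T, T⁻¹]` times a power `bᵐ`, and acts as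
`x ↦ (1 + X)ᵐx + f(1 + X)`. Faithfulness therefore reduces to injectivity of evaluating Laurent
polynomials at `T = 1 + X`, which after clearing denominators is injectivity of the Taylor shift
`p ↦ p(X + 1)`. Transitivity on levels holds because the translations include those by all
polynomials in `X = (1 + X) - 1`.
-/

namespace LamplighterTree

open PowerSeries

variable {R : Type*} [CommRing R]

noncomputable def ofList (l : List R) : R⟦X⟧ := mk fun i => l.getD i 0

noncomputable def toList (n : ℕ) (f : R⟦X⟧) : List R := (List.range n).map fun i => coeff i f

@[simp] lemma length_toList (n : ℕ) (f : R⟦X⟧) : (toList n f).length = n := by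
  simp [toList]

lemma toList_ofList (l : List R) : toList l.length (ofList l) = l := by
  apply List.ext_getElem (length_toList _ _)
  intro i _ hi
  simp [toList, ofList, List.getElem?_eq_getElem hi]

lemma toList_eq_of_X_pow_dvd_sub {n : ℕ} {f g : R⟦X⟧} (h : X ^ n ∣ f - g) :
    toList n f = toList n g := by
  refine List.map_congr_left fun i hi => ?_
  have := X_pow_dvd_iff.mp h i (List.mem_range.mp hi)
  rwa [map_sub, sub_eq_zero] at this

lemma X_pow_dvd_ofList_toList_sub (n : ℕ) (f : R⟦X⟧) : X ^ n ∣ ofList (toList n f) - f :=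
  X_pow_dvd_iff.mpr fun m hm => by simp [ofList, toList, List.getElem?_range hm]

lemma toList_prefix_toList {m n : ℕ} (h : m ≤ n) (f : R⟦X⟧) : toList m f <+: toList n f := by
  obtain ⟨d, rfl⟩ := Nat.exists_eq_add_of_le h
  simp [toList, List.range_add]

lemma X_pow_dvd_ofList_sub_of_prefix {l₁ l₂ : List R} (h : l₁ <+: l₂) :
    X ^ l₁.length ∣ ofList l₂ - ofList l₁ := by
  obtain ⟨t, rfl⟩ := h
  refine X_pow_dvd_iff.mpr fun m hm => ?_
  simp [ofList, List.getElem?_append_left hm]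

lemma eq_of_forall_toList_eq {f g : R⟦X⟧} (h : ∀ n, toList n f = toList n g) : f = g := by
  ext i
  simpa [toList, List.getElem?_range] using congrArg (·[i]?) (h (i + 1))

noncomputable def affAct (u p : R⟦X⟧) (l : List R) : List R := toList l.length (u * ofList l + p)

@[simp] lemma length_affAct (u p : R⟦X⟧) (l : List R) : (affAct u p l).length = l.length :=
  length_toList _ _

lemma affAct_toList (u p f : R⟦X⟧) (n : ℕ) : affAct u p (toList n f) = toList n (u * f + p) := by
  rw [affAct, length_toList]
  refine toList_eq_of_X_pow_dvd_sub ?_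
  convert dvd_mul_of_dvd_right (X_pow_dvd_ofList_toList_sub n f) u using 1
  ring

lemma affAct_affAct (u p v q : R⟦X⟧) (l : List R) :
    affAct u p (affAct v q l) = affAct (u * v) (u * q + p) l := by
  change affAct u p (toList l.length (v * ofList l + q)) = _
  rw [affAct_toList, affAct]
  ring_nf

lemma affAct_one_zero (l : List R) : affAct 1 0 l = l := by
  rw [affAct, one_mul, add_zero, toList_ofList]

lemma affAct_prefix_affAct (u p : R⟦X⟧) {l₁ l₂ : List R} (h : l₁ <+: l₂) :
    affAct u p l₁ <+: affAct u p l₂ := by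
  have hdvd : X ^ l₁.length ∣ (u * ofList l₂ + p) - (u * ofList l₁ + p) := by
    convert dvd_mul_of_dvd_right (X_pow_dvd_ofList_sub_of_prefix h) u using 1
    ring
  rw [affAct, ← toList_eq_of_X_pow_dvd_sub hdvd]
  exact toList_prefix_toList h.length_le _

noncomputable def affPerm (u : R⟦X⟧ˣ) (p : R⟦X⟧) : Equiv.Perm (List R) where
  toFun := affAct u p
  invFun := affAct ↑u⁻¹ (-(↑u⁻¹ * p))
  left_inv l := by simp [affAct_affAct, affAct_one_zero]
  right_inv l := by simp [affAct_affAct, affAct_one_zero]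

@[simp] lemma affPerm_apply (u : R⟦X⟧ˣ) (p : R⟦X⟧) (l : List R) : affPerm u p l = affAct u p l :=
  rfl

lemma affPerm_mul (u v : R⟦X⟧ˣ) (p q : R⟦X⟧) :
    affPerm u p * affPerm v q = affPerm (u * v) (u * q + p) :=
  Equiv.ext fun l => affAct_affAct _ _ _ _ l

lemma affPerm_one_zero : affPerm (1 : R⟦X⟧ˣ) 0 = 1 :=
  Equiv.ext affAct_one_zero

lemma eq_one_and_eq_zero_of_affPerm_eq_one {u : R⟦X⟧ˣ} {p : R⟦X⟧} (h : affPerm u p = 1) :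
    (u : R⟦X⟧) = 1 ∧ p = 0 := by
  have key (f : R⟦X⟧) : u * f + p = f := eq_of_forall_toList_eq fun n => by
    rw [← affAct_toList, ← affPerm_apply, h, Equiv.Perm.one_apply]
  have hp : p = 0 := by simpa using key 0
  exact ⟨by simpa [hp] using key 1, hp⟩

noncomputable def translation : Multiplicative R⟦X⟧ →* Equiv.Perm (List R) where
  toFun p := affPerm 1 p.toAdd
  map_one' := affPerm_one_zero
  map_mul' p q := by rw [affPerm_mul, mul_one, Units.val_one, one_mul, toAdd_mul, add_comm]

noncomputable def dilation : R⟦X⟧ˣ →* Equiv.Perm (List R) where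
  toFun u := affPerm u 0
  map_one' := affPerm_one_zero
  map_mul' u v := by rw [affPerm_mul, mul_zero, add_zero]

lemma translation_mul_dilation (p : R⟦X⟧) (u : R⟦X⟧ˣ) :
    translation (.ofAdd p) * dilation u = affPerm u p := by
  simp [translation, dilation, affPerm_mul]

lemma dilation_conj_translation (u : R⟦X⟧ˣ) (p : R⟦X⟧) :
    dilation u * translation (.ofAdd p) * (dilation u)⁻¹ =
      translation (.ofAdd ((u : R⟦X⟧) * p)) := by
  rw [mul_inv_eq_iff_eq_mul, translation_mul_dilation]
  simp [translation, dilation, affPerm_mul]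

lemma ofList_cons (x : R) (l : List R) : ofList (x :: l) = C x + X * ofList l := by
  ext (_ | n) <;> simp [ofList, coeff_succ_X_mul]

lemma toList_succ_C_add_X_mul (n : ℕ) (a : R) (f : R⟦X⟧) :
    toList (n + 1) (C a + X * f) = a :: toList n f := by
  simp [toList, List.range_succ_eq_map, coeff_C, coeff_succ_X_mul]

lemma lampAct_eq_affAct {k : ℕ} (r : ZMod k) (l : List (ZMod k)) :
    lampAct k r l = affAct (X + 1) (C r) l := by
  induction l generalizing r with
  | nil => rfl
  | cons x xs ih =>
    rw [lampAct, ih, affAct, affAct, List.length_cons, ← toList_succ_C_add_X_mul, ofList_cons]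
    congr 1
    rw [map_add]
    ring

noncomputable def unitXAddOne : R⟦X⟧ˣ :=
  ⟨X + 1, invOfUnit (X + 1) 1, mul_invOfUnit _ _ (by simp), invOfUnit_mul _ _ (by simp)⟩

@[simp] lemma val_unitXAddOne : (unitXAddOne : R⟦X⟧ˣ) = (X + 1 : R⟦X⟧) := rfl

open LaurentPolynomial in
noncomputable def evalXAddOne : R[T;T⁻¹] →+* R⟦X⟧ := eval₂ C unitXAddOne

open LaurentPolynomial in
@[simp] lemma evalXAddOne_T (n : ℤ) : evalXAddOne (T n : R[T;T⁻¹]) = ↑((unitXAddOne : R⟦X⟧ˣ) ^ n) :=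
  eval₂_T _ _ n

open LaurentPolynomial in
@[simp] lemma evalXAddOne_C (r : R) : evalXAddOne (C r : R[T;T⁻¹]) = PowerSeries.C r :=
  eval₂_C _ _ r

open LaurentPolynomial in
lemma evalXAddOne_toLaurent (p : Polynomial R) :
    evalXAddOne (Polynomial.toLaurent p) = (Polynomial.taylor 1 p : R⟦X⟧) := by
  have hC : Polynomial.coeToPowerSeries.ringHom.comp Polynomial.C = (C : R →+* R⟦X⟧) :=
    RingHom.ext Polynomial.coe_C
  rw [evalXAddOne, eval₂_toLaurent, Polynomial.taylor_apply, Polynomial.comp,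
    ← Polynomial.coeToPowerSeries.ringHom_apply, Polynomial.hom_eval₂, hC]
  simp

lemma evalXAddOne_injective : Function.Injective (evalXAddOne : LaurentPolynomial R →+* R⟦X⟧) := by
  refine (injective_iff_map_eq_zero _).mpr fun f hf => ?_
  obtain ⟨n, p, hp⟩ := LaurentPolynomial.exists_T_pow f
  have : Polynomial.taylor 1 p = 0 := by
    rw [← Polynomial.coe_eq_zero_iff, ← evalXAddOne_toLaurent, hp, map_mul, hf, zero_mul]
  rw [LinearMap.map_eq_zero_iff _ (Polynomial.taylor_injective 1), ← Polynomial.toLaurent_eq_zero,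
    hp] at this
  exact (LaurentPolynomial.isUnit_T (n : ℤ)).mul_left_eq_zero.mp this

lemma ofList_mem_range_evalXAddOne (l : List R) :
    ofList l ∈ (evalXAddOne : LaurentPolynomial R →+* R⟦X⟧).range := by
  have hX : (X : R⟦X⟧) ∈ (evalXAddOne : LaurentPolynomial R →+* R⟦X⟧).range :=
    ⟨LaurentPolynomial.T 1 - 1, by simp⟩
  induction l with
  | nil => exact ⟨0, by ext; simp [ofList]⟩
  | cons x xs ih =>
    rw [ofList_cons]
    exact add_mem ⟨LaurentPolynomial.C x, evalXAddOne_C x⟩ (mul_mem hX ih)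

end LamplighterTree

namespace Lamplighter

open LaurentPolynomial
open scoped IsMulCommutative

variable {k : ℕ}

lemma llc_pow_card : llc k ^ k = 1 := by
  change PresentedGroup.mk (llRels k) (FreeGroup.of false) ^ k = 1
  rw [← map_pow]
  exact PresentedGroup.one_of_mem (Or.inl rfl)

def lamp (k : ℕ) (i : ℤ) : Lamplighter k := MulAut.conj (llb k ^ i) (llc k)

lemma commute_llc_lamp_natCast (n : ℕ) : Commute (llc k) (lamp k n) := by
  have := PresentedGroup.one_of_mem (rels := llRels k) (Or.inr (Set.mem_iUnion.mpr ⟨n, rfl⟩))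
  simp only [map_commutatorElement, map_mul, map_pow, map_inv,
    commutatorElement_eq_one_iff_commute] at this
  rwa [lamp, MulAut.conj_apply, zpow_natCast, ← inv_pow]

lemma conj_lamp (m i : ℤ) : MulAut.conj (llb k ^ m) (lamp k i) = lamp k (m + i) := by
  rw [lamp, lamp, ← MulAut.mul_apply, ← map_mul, zpow_add]

lemma lamp_commute (i j : ℤ) : Commute (lamp k i) (lamp k j) := by
  wlog hij : i ≤ j generalizing i j
  · exact (this j i (by omega)).symm
  obtain ⟨n, rfl⟩ := Int.exists_add_of_le hij
  have h := (commute_llc_lamp_natCast (k := k) n).map (MulAut.conj (llb k ^ i))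
  rwa [conj_lamp] at h

lemma lamp_pow_card (i : ℤ) : lamp k i ^ k = 1 := by
  rw [lamp, ← map_pow, llc_pow_card, map_one]

def lampSubgroup (k : ℕ) : Subgroup (Lamplighter k) := Subgroup.closure (Set.range (lamp k))

instance : IsMulCommutative (lampSubgroup k) :=
  Subgroup.isMulCommutative_closure <| by
    rintro _ ⟨i, rfl⟩ _ ⟨j, rfl⟩
    exact lamp_commute i j

noncomputable def lampConfig (k : ℕ) (f : (ZMod k)[T;T⁻¹]) : Lamplighter k :=
  (f.coeff.prod fun i r => (⟨lamp k i, Subgroup.subset_closure ⟨i, rfl⟩⟩ : lampSubgroup k) ^ r.val :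
    lampSubgroup k)

lemma lampConfig_C_mul_T (r : ZMod k) (n : ℤ) : lampConfig k (C r * T n) = lamp k n ^ r.val := by
  simp [lampConfig, ← single_eq_C_mul_T, AddMonoidAlgebra.coeff_single]

section

variable [NeZero k]

lemma lampConfig_add (f g : (ZMod k)[T;T⁻¹]) :
    lampConfig k (f + g) = lampConfig k f * lampConfig k g := by
  rw [lampConfig, AddMonoidAlgebra.coeff_add, Finsupp.prod_add_index' (by simp), Subgroup.coe_mul]
  · rfl
  · intro i r s
    rw [← pow_add, ZMod.val_add, ← pow_eq_pow_mod]
    exact Subtype.ext (lamp_pow_card i)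

lemma lampConfig_zero : lampConfig k 0 = 1 := by
  simpa using lampConfig_add (k := k) 0 0

lemma lampConfig_neg (f : (ZMod k)[T;T⁻¹]) : lampConfig k (-f) = (lampConfig k f)⁻¹ := by
  rw [eq_inv_iff_mul_eq_one, ← lampConfig_add, neg_add_cancel, lampConfig_zero]

lemma lampConfig_T_mul (m : ℤ) (f : (ZMod k)[T;T⁻¹]) :
    lampConfig k (T m * f) = MulAut.conj (llb k ^ m) (lampConfig k f) := by
  induction f using LaurentPolynomial.induction_on' with
  | add f g hf hg => rw [mul_add, lampConfig_add, lampConfig_add, hf, hg, map_mul]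
  | C_mul_T n r =>
    rw [← mul_assoc, mul_comm (T m), mul_assoc, ← T_add, lampConfig_C_mul_T, lampConfig_C_mul_T,
      map_pow, conj_lamp]

lemma exists_lampConfig_mul_zpow_eq (g : Lamplighter k) :
    ∃ (f : (ZMod k)[T;T⁻¹]) (m : ℤ), lampConfig k f * llb k ^ m = g := by
  let H : Subgroup (Lamplighter k) :=
    { carrier := {g | ∃ (f : (ZMod k)[T;T⁻¹]) (m : ℤ), lampConfig k f * llb k ^ m = g}
      one_mem' := ⟨0, 0, by simp [lampConfig_zero]⟩
      mul_mem' := by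
        rintro _ _ ⟨f, m, rfl⟩ ⟨f', m', rfl⟩
        refine ⟨f + T m * f', m + m', ?_⟩
        rw [lampConfig_add, lampConfig_T_mul, MulAut.conj_apply, zpow_add]
        group
      inv_mem' := by
        rintro _ ⟨f, m, rfl⟩
        refine ⟨T (-m) * -f, -m, ?_⟩
        rw [lampConfig_T_mul, MulAut.conj_apply, lampConfig_neg]
        group }
  refine PresentedGroup.generated_by _ H (fun j => ?_) g
  cases j
  · refine ⟨C 1, 0, ?_⟩
    rw [← mul_one (C 1), ← T_zero, lampConfig_C_mul_T, ZMod.val_one_eq_one_mod,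
      ← pow_eq_pow_mod _ (lamp_pow_card 0)]
    simp [lamp, llc]
  · exact ⟨0, 1, by simp [lampConfig_zero, llb]⟩

end

open LamplighterTree

noncomputable def treeGen (k : ℕ) : Bool → Equiv.Perm (List (ZMod k))
  | true => dilation unitXAddOne
  | false => translation (.ofAdd 1)

lemma lift_treeGen_eq_one_of_mem_llRels (k : ℕ) : ∀ r ∈ llRels k, FreeGroup.lift (treeGen k) r = 1 := by
  rintro r (hr | hr)
  · rw [Set.mem_singleton_iff.mp hr, map_pow, FreeGroup.lift_apply_of, treeGen, ← map_pow,
      ← ofAdd_nsmul, nsmul_one, ← map_natCast PowerSeries.C, ZMod.natCast_self, map_zero,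
      ofAdd_zero, map_one]
  · obtain ⟨n, rfl⟩ := Set.mem_iUnion.mp hr
    simp only [map_commutatorElement, map_mul, map_pow, map_inv, FreeGroup.lift_apply_of, treeGen,
      commutatorElement_eq_one_iff_commute]
    rw [inv_pow, ← map_pow, dilation_conj_translation]
    exact (Commute.all _ _).map translation

noncomputable def treeAction (k : ℕ) : Lamplighter k →* Equiv.Perm (List (ZMod k)) :=
  PresentedGroup.toGroup (lift_treeGen_eq_one_of_mem_llRels k)

lemma treeAction_llb : treeAction k (llb k) = dilation unitXAddOne :=
  PresentedGroup.toGroup.of _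

lemma treeAction_llc : treeAction k (llc k) = translation (.ofAdd 1) :=
  PresentedGroup.toGroup.of _

lemma treeAction_llc_pow_mul_llb (i : ℕ) (l : List (ZMod k)) :
    treeAction k (llc k ^ i * llb k) l = lampAct k i l := by
  rw [map_mul, map_pow, treeAction_llc, treeAction_llb, ← map_pow, ← ofAdd_nsmul, nsmul_one,
    translation_mul_dilation, affPerm_apply, lampAct_eq_affAct, val_unitXAddOne, map_natCast]

lemma treeAction_lamp (i : ℤ) :
    treeAction k (lamp k i) =
      translation (.ofAdd ↑((unitXAddOne : (PowerSeries (ZMod k))ˣ) ^ i)) := by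
  rw [lamp, MulAut.conj_apply, map_mul, map_mul, map_inv, map_zpow, treeAction_llb, treeAction_llc,
    ← map_zpow, dilation_conj_translation, mul_one]

section

variable [NeZero k]

lemma treeAction_lampConfig (f : (ZMod k)[T;T⁻¹]) :
    treeAction k (lampConfig k f) = translation (.ofAdd (evalXAddOne f)) := by
  induction f using LaurentPolynomial.induction_on' with
  | add f g hf hg => rw [lampConfig_add, map_mul, hf, hg, map_add, ofAdd_add, map_mul]
  | C_mul_T n r =>
    rw [lampConfig_C_mul_T, map_pow, treeAction_lamp, ← map_pow, ← ofAdd_nsmul, map_mul,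
      evalXAddOne_C, evalXAddOne_T, nsmul_eq_mul, ← map_natCast PowerSeries.C,
      ZMod.natCast_zmod_val]

lemma treeAction_lampConfig_mul_zpow (f : (ZMod k)[T;T⁻¹]) (m : ℤ) :
    treeAction k (lampConfig k f * llb k ^ m) = affPerm (unitXAddOne ^ m) (evalXAddOne f) := by
  rw [map_mul, map_zpow, treeAction_lampConfig, treeAction_llb, ← map_zpow,
    translation_mul_dilation]

lemma exists_treeAction_eq_affPerm (g : Lamplighter k) :
    ∃ u p, treeAction k g = affPerm u p := by
  obtain ⟨f, m, rfl⟩ := exists_lampConfig_mul_zpow_eq g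
  exact ⟨_, _, treeAction_lampConfig_mul_zpow f m⟩

lemma treeAction_injective [Fact (1 < k)] : Function.Injective (treeAction k) := by
  refine (injective_iff_map_eq_one _).mpr fun g hg => ?_
  obtain ⟨f, m, rfl⟩ := exists_lampConfig_mul_zpow_eq g
  rw [treeAction_lampConfig_mul_zpow] at hg
  obtain ⟨hu, hp⟩ := eq_one_and_eq_zero_of_affPerm_eq_one hg
  have hm : m = 0 := by
    have : evalXAddOne (T m : (ZMod k)[T;T⁻¹]) = evalXAddOne (T 0) := by
      rw [evalXAddOne_T, evalXAddOne_T, hu, zpow_zero, Units.val_one]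
    have := congrArg degree (evalXAddOne_injective this)
    rwa [degree_T, degree_T, WithBot.coe_inj] at this
  have hf : f = 0 := evalXAddOne_injective (hp.trans (map_zero _).symm)
  rw [hm, hf, lampConfig_zero, zpow_zero, mul_one]

lemma exists_treeAction_apply_eq {x y : List (ZMod k)} (h : x.length = y.length) :
    ∃ g, treeAction k g x = y := by
  obtain ⟨f, hf⟩ := sub_mem (ofList_mem_range_evalXAddOne y) (ofList_mem_range_evalXAddOne x)
  refine ⟨lampConfig k f, ?_⟩
  rw [treeAction_lampConfig]
  change affAct 1 (evalXAddOne f) x = y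
  rw [affAct, hf, h, one_mul, add_sub_cancel, toList_ofList]

end

end Lamplighter

/-- The formula `c̄_r · (x₁x₂x₃…) = (x₁+r)(x₂+x₁)(x₃+x₂)…` defines an
action of the lamplighter group `L_k` by automorphisms of the rooted `k`-regular tree
(vertices = finite strings over `{0,…,k−1}`): a homomorphism to permutations of strings
that realizes the above formula on the generators `c̄_r = cʳb`, is faithful, preserves
levels (lengths) and the prefix relation, and is transitive on each level of the tree. -/
theorem lamplighter_tree_action (k : ℕ) (hk : 2 ≤ k) :
    ∃ φ : Lamplighter k →* Equiv.Perm (List (ZMod k)),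
      (∀ i : Fin k, ∀ l, φ ((llc k) ^ (i : ℕ) * llb k) l = lampAct k ((i : ℕ) : ZMod k) l) ∧
      Function.Injective φ ∧
      (∀ g l, (φ g l).length = l.length) ∧
      (∀ g l₁ l₂, l₁ <+: l₂ → φ g l₁ <+: φ g l₂) ∧
      (∀ x y : List (ZMod k), x.length = y.length → ∃ g, φ g x = y) := by
  have : NeZero k := ⟨by omega⟩
  have : Fact (1 < k) := ⟨hk⟩
  refine ⟨Lamplighter.treeAction k, fun i l => ?_, Lamplighter.treeAction_injective,
    fun g l => ?_, fun g l₁ l₂ h => ?_, fun x y => Lamplighter.exists_treeAction_apply_eq⟩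
  · exact Lamplighter.treeAction_llc_pow_mul_llb i l
  all_goals
    obtain ⟨u, p, hg⟩ := Lamplighter.exists_treeAction_eq_affPerm g
    simp only [hg, LamplighterTree.affPerm_apply]
  · exact LamplighterTree.length_affAct _ _ l
  · exact LamplighterTree.affAct_prefix_affAct _ _ h
end

section
/- For every N ≥ 0, the graph Γ_{k,N+1} of the action of the lamplighter group L_k on the (N+1)-st level of the k-regular rooted tree (with respect to the generators c̄_r = cʳb, 0 ≤ r ≤ k−1) is isomorphic, as an oriented graph forgetting labels, to the line graph of Γ_{k,N}. -/
/-- The de Bruijn graph `B_{k,N}`: vertices are words `x₁…x_N` over `{0,…,k−1}`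
(realized as `ZMod k`), and for each symbol `y` there is one edge from `x₁…x_N`
to `x₂…x_N y`. -/
def deBruijn (k N : ℕ) : OGraph where
  V := Fin N → ZMod k
  E := (Fin N → ZMod k) × ZMod k
  ι e := e.1
  τ e := fun j => if h : (j : ℕ) + 1 < N then e.1 ⟨(j : ℕ) + 1, h⟩ else e.2

/-- The graph `Γ_{k,N}` of the action of the lamplighter group `L_k = ℤ/kℤ ≀ ℤ` on the
`N`-th level of the `k`-regular rooted tree, with respect to the generators
`c̄_r = cʳb` (`0 ≤ r ≤ k−1`, realized as `r : ZMod k`): for each vertex `x = x₁…x_N`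
and each `r` there is one edge from `x` to
`c̄_r · x = (x₁+r)(x₂+x₁)…(x_N+x_{N−1})` (mod `k`). -/
def gammaGraph (k N : ℕ) : OGraph where
  V := Fin N → ZMod k
  E := (Fin N → ZMod k) × ZMod k
  ι e := e.1
  τ e := fun j => if (j : ℕ) = 0 then e.1 j + e.2
    else e.1 j + e.1 ⟨(j : ℕ) - 1, Nat.lt_of_le_of_lt (Nat.sub_le _ _) j.2⟩

/-! Identify a word `x₁x₂…x_{N+1}` with the edge of `Γ_{k,N}` that leaves `x₂…x_{N+1}` with
label `x₁`. Since `c̄_r · x` is the letter `x₁ + r` followed by `c̄_{x₁} · x₂…x_{N+1}`, the edge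
`x → c̄_r · x` of `Γ_{k,N+1}` becomes a pair of consecutive edges of `Γ_{k,N}`, and every such
pair arises from exactly one `r`, namely the difference of the two labels. -/

namespace gammaGraph

variable {k N : ℕ}

def tailHeadEquiv : (Fin (N + 1) → ZMod k) ≃ (Fin N → ZMod k) × ZMod k :=
  (Fin.consEquiv fun _ => ZMod k).symm.trans (Equiv.prodComm _ _)

theorem head_τ (x : Fin (N + 1) → ZMod k) (r : ZMod k) :
    (gammaGraph k (N + 1)).τ (x, r) 0 = x 0 + r :=
  rfl

theorem tail_τ (x : Fin (N + 1) → ZMod k) (r : ZMod k) :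
    Fin.tail ((gammaGraph k (N + 1)).τ (x, r)) = (gammaGraph k N).τ (Fin.tail x, x 0) := by
  funext j
  rcases j with ⟨_ | j, _⟩ <;> rfl

def succEdgeEquivLineEdge : (gammaGraph k (N + 1)).E ≃ (gammaGraph k N).line.E where
  toFun e := ⟨(tailHeadEquiv e.1, tailHeadEquiv ((gammaGraph k (N + 1)).τ e)), (tail_τ e.1 e.2).symm⟩
  invFun p := (tailHeadEquiv.symm p.1.1, p.1.2.2 - p.1.1.2)
  left_inv := fun ⟨x, r⟩ => by
    refine Prod.ext (tailHeadEquiv.symm_apply_apply x) ?_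
    change (gammaGraph k (N + 1)).τ (x, r) 0 - x 0 = r
    rw [head_τ, add_sub_cancel_left]
  right_inv := fun ⟨⟨⟨v, s⟩, ⟨w, t⟩⟩, h⟩ => by
    have hw : (gammaGraph k N).τ (v, s) = w := h
    refine Subtype.ext (Prod.ext rfl (Prod.ext ?_ ?_))
    · change Fin.tail ((gammaGraph k (N + 1)).τ (Fin.cons s v, t - s)) = w
      rw [tail_τ, Fin.tail_cons, Fin.cons_zero, hw]
    · change (gammaGraph k (N + 1)).τ (Fin.cons s v, t - s) 0 = t
      rw [head_τ, Fin.cons_zero, add_sub_cancel]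

end gammaGraph

theorem gammaGraph_succ_iso_line_general (k N : ℕ) :
    Nonempty (OGraph.Iso (gammaGraph k (N + 1)) (gammaGraph k N).line) :=
  ⟨{ fV := gammaGraph.tailHeadEquiv
     fE := gammaGraph.succEdgeEquivLineEdge
     hι := fun _ => rfl
     hτ := fun _ => rfl }⟩

/-- For every `N ≥ 0`, the action graph `Γ_{k,N+1}` is isomorphic,
as an oriented graph (forgetting labels), to the line graph of `Γ_{k,N}`. -/
theorem gammaGraph_succ_iso_line (k N : ℕ) (hk : 2 ≤ k) :
    Nonempty (OGraph.Iso (gammaGraph k (N + 1)) (gammaGraph k N).line) :=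
  gammaGraph_succ_iso_line_general k N
end

section
/- Let R be a finite ring and P = Σ_{j=0}^d p_j t^j ∈ R[t] a polynomial whose leading coefficient p_d is invertible in R. Then the equation P·x = 0 has at most |R|^d solutions x in the formal power series ring R[[t]]. Moreover, if the lowest nonzero coefficient of P is invertible, then x = 0 is the only solution. -/
/-!
The coefficient of `t^(n+d)` in `P·x` is `∑ p_j x_(n+d-j)`; as `p_d` is a unit, `x_n` is a
function of `x_(n+1), …, x_(n+d)`. So the windows `(x_n, …, x_(n+d-1)) ∈ R^d` of a solution
form a backward orbit `w_n = f w_(n+1)` of a single map `f` on the finite set `R^d`. Some power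
`f^N` (`N ≥ 1`) is idempotent, whence `w_(n+1) = f^N w_(n+1) = f^(N-1) w_n`: a backward orbit
is determined by `w_0`, and there are at most `|R|^d` solutions.
If the trailing coefficient is a unit, then `P = t^k Q` with `Q` invertible in `R[[t]]`, and
`t^k` is not a zero divisor.
-/

open Polynomial

theorem exists_isIdempotentElem_pow {M : Type*} [Monoid M] [Finite M] (a : M) :
    ∃ N, 0 < N ∧ IsIdempotentElem (a ^ N) := by
  obtain ⟨m, n, hmn, h⟩ := Finite.exists_ne_map_eq_of_infinite (a ^ · : ℕ → M)
  wlog hlt : m < n generalizing m n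
  · exact this n m hmn.symm h.symm (by omega)
  obtain ⟨p, rfl⟩ := Nat.exists_eq_add_of_lt hlt
  have periodic : ∀ k, a ^ (m + k * (p + 1)) = a ^ m := by
    intro k
    induction k with
    | zero => simp
    | succ k ih => rw [add_mul, one_mul, ← add_assoc, pow_add, ih, ← pow_add]; exact h.symm
  set N := (m + 1) * (p + 1)
  obtain ⟨r, hr⟩ := Nat.exists_eq_add_of_le (show m ≤ N by simp only [N]; nlinarith)
  refine ⟨N, by positivity, ?_⟩
  calc a ^ N * a ^ N = a ^ (m + N) * a ^ r := by rw [← pow_add, ← pow_add, hr]; ring_nf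
    _ = a ^ N := by rw [periodic, ← pow_add, hr]

theorem eq_of_eq_apply_succ {α : Type*} [Finite α] (f : α → α) {u v : ℕ → α}
    (hu : ∀ n, u n = f (u (n + 1))) (hv : ∀ n, v n = f (v (n + 1))) (h0 : u 0 = v 0) :
    u = v := by
  have : Finite (Function.End α) := inferInstanceAs (Finite (α → α))
  obtain ⟨N, hN, hidem⟩ := exists_isIdempotentElem_pow (show Function.End α from f)
  have succ_eq : ∀ w : ℕ → α, (∀ n, w n = f (w (n + 1))) →
      ∀ n, w (n + 1) = f^[N - 1] (w n) := by
    intro w hw n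
    have iter : ∀ k m, w m = f^[k] (w (m + k)) := by
      intro k
      induction k with
      | zero => simp
      | succ k ih => intro m; rw [ih, Function.iterate_succ_apply, ← add_assoc, ← hw]
    have hidem_apply : ∀ y, f^[N] (f^[N] y) = f^[N] y := fun y => congrFun hidem y
    calc w (n + 1) = f^[N] (w (n + 1)) := by rw [iter N (n + 1), hidem_apply]
      _ = f^[N - 1] (w n) := by
        rw [hw n, ← Function.iterate_succ_apply, Nat.succ_eq_add_one, Nat.sub_add_cancel hN]
  funext n
  induction n with
  | zero => exact h0
  | succ n ih => rw [succ_eq u hu, succ_eq v hv, ih]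

theorem eq_of_backward_recurrence {α : Type*} [Finite α] {d : ℕ} (g : (Fin d → α) → α)
    {s t : ℕ → α} (hs : ∀ n, s n = g fun i => s (n + 1 + i))
    (ht : ∀ n, t n = g fun i => t (n + 1 + i)) (h : ∀ i : Fin d, s i = t i) : s = t := by
  cases d with
  | zero => funext n; rw [hs, ht]; congr 1; funext i; exact i.elim0
  | succ d =>
    let window (w : ℕ → α) (n : ℕ) : Fin (d + 1) → α := fun i => w (n + i)
    let f (w : Fin (d + 1) → α) : Fin (d + 1) → α := Fin.cons (g w) (Fin.init w)
    have window_succ : ∀ w : ℕ → α, (∀ n, w n = g fun i => w (n + 1 + i)) →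
        ∀ n, window w n = f (window w (n + 1)) := by
      intro w hw n
      ext i
      refine Fin.cases ?_ (fun i => ?_) i
      · simpa [window, f] using hw n
      · simp only [window, f, Fin.cons_succ, Fin.init, Fin.val_succ, Fin.val_castSucc]
        ring_nf
    have windows_eq := eq_of_eq_apply_succ f (window_succ s hs) (window_succ t ht)
      (by simpa [window] using funext h)
    funext n
    simpa [window] using congrFun (congrFun windows_eq n) 0

theorem Polynomial.eq_zero_of_coe_mul_eq_zero {R : Type*} [CommRing R] {P : R[X]}
    (hP : IsUnit P.trailingCoeff) {x : PowerSeries R} (hx : (P : PowerSeries R) * x = 0) :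
    x = 0 := by
  obtain ⟨Q, hQ⟩ : PowerSeries.X ^ P.natTrailingDegree ∣ (P : PowerSeries R) :=
    PowerSeries.X_pow_dvd_iff.2 fun d hd => by
      rw [coeff_coe, coeff_eq_zero_of_lt_natTrailingDegree hd]
  have hQ_unit : IsUnit Q := by
    rw [PowerSeries.isUnit_iff_constantCoeff]
    convert hP using 1
    simpa [PowerSeries.coeff_X_pow_mul', trailingCoeff] using
      (congrArg (PowerSeries.coeff P.natTrailingDegree) hQ).symm
  rw [hQ, mul_assoc, ← mul_zero (PowerSeries.X ^ _)] at hx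
  exact hQ_unit.mul_right_eq_zero.1 (PowerSeries.X_pow_mul_cancel hx)

theorem Polynomial.coeff_add_natDegree_coe_mul {R : Type*} [Semiring R] (P : R[X])
    (x : PowerSeries R) (n : ℕ) :
    PowerSeries.coeff (n + P.natDegree) ((P : PowerSeries R) * x) =
      ∑ j ∈ Finset.range (P.natDegree + 1),
        P.coeff j * PowerSeries.coeff (n + P.natDegree - j) x := by
  rw [PowerSeries.coeff_mul, Finset.Nat.sum_antidiagonal_eq_sum_range_succ_mk]
  simp only [coeff_coe]
  refine (Finset.sum_subset (Finset.range_subset_range.2 (by omega)) fun j _ hj => ?_).symm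
  rw [coeff_eq_zero_of_natDegree_lt (by simp at hj; omega), zero_mul]

theorem Polynomial.exists_backward_recurrence_of_coe_mul_eq_zero {R : Type*} [CommRing R]
    {P : R[X]} (hP : IsUnit P.leadingCoeff) :
    ∃ g : (Fin P.natDegree → R) → R, ∀ x : PowerSeries R, (P : PowerSeries R) * x = 0 →
      ∀ n, PowerSeries.coeff n x = g fun i => PowerSeries.coeff (n + 1 + i) x := by
  obtain ⟨c, hc⟩ := hP.exists_left_inv
  refine ⟨fun w => -c * ∑ j : Fin P.natDegree, P.coeff j * w j.rev, fun x hx n => ?_⟩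
  have h := P.coeff_add_natDegree_coe_mul x n
  rw [hx, map_zero, Finset.sum_range_succ, Nat.add_sub_cancel, coeff_natDegree] at h
  have hsum : ∑ j : Fin P.natDegree, P.coeff j * PowerSeries.coeff (n + 1 + j.rev) x =
      ∑ j ∈ Finset.range P.natDegree,
        P.coeff j * PowerSeries.coeff (n + P.natDegree - j) x := by
    rw [← Fin.sum_univ_eq_sum_range]
    refine Finset.sum_congr rfl fun j _ => ?_
    rw [Fin.val_rev]
    congr 3
    omega
  simp only [hsum]
  linear_combination (-c) * h - PowerSeries.coeff n x * hc

/-- Let `R` be a finite (commutative) ring and `P ∈ R[t]` a polynomial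
of degree `d` whose leading coefficient is invertible.  Then `P·x = 0` has at most
`|R|^d` solutions `x` in the power series ring `R[[t]]`; and if moreover the lowest
nonzero coefficient of `P` is invertible, then `x = 0` is the only solution. -/
theorem finite_ring_polynomial_annihilator (R : Type) [CommRing R] [Finite R]
    (P : Polynomial R) (hlead : IsUnit P.leadingCoeff) :
    Nat.card {x : PowerSeries R // (P : PowerSeries R) * x = 0} ≤ Nat.card R ^ P.natDegree ∧
    (IsUnit P.trailingCoeff →
      ∀ x : PowerSeries R, (P : PowerSeries R) * x = 0 → x = 0) := by
  refine ⟨?_, fun htrail _ hx => eq_zero_of_coe_mul_eq_zero htrail hx⟩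
  obtain ⟨g, hg⟩ := exists_backward_recurrence_of_coe_mul_eq_zero hlead
  have initial_coeffs_injective : Function.Injective
      fun x : {x : PowerSeries R // (P : PowerSeries R) * x = 0} =>
        fun i : Fin P.natDegree => PowerSeries.coeff i x.1 := by
    rintro ⟨x, hx⟩ ⟨y, hy⟩ hxy
    ext n
    exact congrFun (eq_of_backward_recurrence g (hg x hx) (hg y hy) (congrFun hxy)) n
  calc Nat.card {x : PowerSeries R // (P : PowerSeries R) * x = 0}
      ≤ Nat.card (Fin P.natDegree → R) :=
        Nat.card_le_card_of_injective _ initial_coeffs_injective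
    _ = Nat.card R ^ P.natDegree := by simp [Nat.card_fun]
end

section
/- For every k ≥ 2, M ∈ ℕ ∪ {∞} and N ≥ 0, the oriented spider-web graph S_{k,N,M} is vertex-transitive (by graph automorphisms, not necessarily label-preserving) if and only if M ≥ N. In particular, when M < N, the two vertices (0…0, 0) and (10…0, 0) of the non-oriented spider-web graph lie in different automorphism orbits, because there are strictly more closed paths of length M through (0…0, 0) than through (10…0, 0). -/
/-!
For any `D : ℤ/Mℤ → ℤ/kℤ` and `t`, the map `(x, i) ↦ (j ↦ x j + D (i + t + j), i + t)` is an
automorphism: as a letter travels to the left along an edge, its position `i + j` in the cycle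
stays the same, so it keeps receiving the same correction `D (i + t + j)`. If `M = ∞` or `N ≤ M`,
the positions `i' + j` (`j < N`) are distinct in `ℤ/Mℤ`, so `D` can be chosen to move any `(x, i)`
to any `(x', i')`.

Conversely, automorphisms preserve directed closed walks of length `M`. For `0 < M < N` the vertex
`(0…0, 0)` lies on one, but a walk of length `M` moves each letter `M` places to the left, so a
closed walk through `(x, 0)` forces `x₀ = x_M`, which fails for `x = 10…0`.
-/

section ShiftAppend

variable {α : Type*} {N : ℕ}

def shiftAppend (x : Fin N → α) (y : α) : Fin N → α :=
  fun j => if h : (j : ℕ) + 1 < N then x ⟨(j : ℕ) + 1, h⟩ else y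

theorem shiftAppend_of_lt (x : Fin N → α) (y : α) (j : Fin N)
    (h : (j : ℕ) + 1 < N) : shiftAppend x y j = x ⟨(j : ℕ) + 1, h⟩ :=
  dif_pos h

theorem shiftAppend_const (c : α) :
    shiftAppend (fun _ : Fin N => c) c = fun _ => c := by
  funext j
  unfold shiftAppend
  split_ifs <;> rfl

theorem shiftAppend_add [Add α] (x : Fin N → α) (y : α) (f : ℕ → α) :
    shiftAppend (fun j => x j + f j) (y + f N) = fun j => shiftAppend x y j + f ((j : ℕ) + 1) := by
  funext j
  unfold shiftAppend
  split_ifs with h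
  · rfl
  · congr 2
    omega

end ShiftAppend

namespace OGraph

def IsVertexTransitive (G : OGraph) : Prop :=
  ∀ u v : G.V, ∃ φ : Iso G G, φ.fV u = v

def HasDirWalk (G : OGraph) : ℕ → G.V → G.V → Prop
  | 0, u, v => u = v
  | n + 1, u, v => ∃ e, G.ι e = u ∧ G.HasDirWalk n (G.τ e) v

theorem Iso.hasDirWalk {G H : OGraph} (φ : Iso G H) {n : ℕ} {u v : G.V}
    (h : G.HasDirWalk n u v) : H.HasDirWalk n (φ.fV u) (φ.fV v) := by
  induction n generalizing u with
  | zero => exact congrArg φ.fV h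
  | succ n ih =>
    obtain ⟨e, rfl, hw⟩ := h
    exact ⟨φ.fE e, φ.hι e, by rw [φ.hτ]; exact ih hw⟩

end OGraph

section Spider

variable {k N M : ℕ}

theorem spider_τ (x : Fin N → ZMod k) (i : ZMod M) (y : ZMod k) :
    (spider k N M).τ ((x, i), y) = (shiftAppend x y, i + 1) :=
  rfl

theorem spider_hasDirWalk_const (c : ZMod k) (i : ZMod M) (n : ℕ) :
    (spider k N M).HasDirWalk n (fun _ => c, i) (fun _ => c, i + n) := by
  induction n generalizing i with
  | zero => exact Prod.ext rfl (by simp)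
  | succ n ih =>
    refine ⟨((fun _ => c, i), c), rfl, ?_⟩
    rw [spider_τ, shiftAppend_const, Nat.cast_succ, add_comm (n : ZMod M), ← add_assoc]
    exact ih (i + 1)

theorem spider_apply_of_hasDirWalk {n : ℕ} {x x' : Fin N → ZMod k} {i i' : ZMod M}
    (hw : (spider k N M).HasDirWalk n (x, i) (x', i')) (j : ℕ) (hj : j + n < N) :
    x' ⟨j, by omega⟩ = x ⟨j + n, hj⟩ := by
  induction n generalizing x i with
  | zero => cases hw; rfl
  | succ n ih =>
    obtain ⟨⟨⟨x₀, i₀⟩, y⟩, he, hw⟩ := hw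
    cases he
    rw [spider_τ] at hw
    rw [ih hw (by omega), shiftAppend_of_lt _ _ _ (by omega)]
    simp only [add_assoc]

def spiderTwistV (D : ZMod M → ZMod k) (t : ZMod M) :
    (Fin N → ZMod k) × ZMod M ≃ (Fin N → ZMod k) × ZMod M where
  toFun p := (fun j => p.1 j + D (p.2 + t + (j : ℕ)), p.2 + t)
  invFun p := (fun j => p.1 j - D (p.2 + (j : ℕ)), p.2 - t)
  left_inv p := by simp
  right_inv p := by simp

def spiderTwist (D : ZMod M → ZMod k) (t : ZMod M) :
    OGraph.Iso (spider k N M).toOGraph (spider k N M).toOGraph where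
  fV := spiderTwistV D t
  fE := (spiderTwistV D t).prodShear fun p => Equiv.addRight (D (p.2 + t + N))
  hι _ := rfl
  hτ := by
    rintro ⟨⟨x, i⟩, y⟩
    show (shiftAppend (fun j => x j + D (i + t + (j : ℕ))) (y + D (i + t + N)), i + t + 1) =
      (fun j => shiftAppend x y j + D (i + 1 + t + (j : ℕ)), i + 1 + t)
    rw [shiftAppend_add x y (fun j => D (i + t + j))]
    refine Prod.ext (funext fun j => ?_) (add_right_comm i t 1)
    simp only [Nat.cast_succ]
    ring_nf

theorem spiderTwist_fV (D : ZMod M → ZMod k) (t : ZMod M) (x : Fin N → ZMod k) (i : ZMod M) :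
    (spiderTwist D t).fV (x, i) = (fun j => x j + D (i + t + (j : ℕ)), i + t) :=
  rfl

theorem ZMod.natCast_fin_injective (h : M = 0 ∨ N ≤ M) :
    Function.Injective (fun j : Fin N => ((j : ℕ) : ZMod M)) := by
  intro a b hab
  have hmod := (ZMod.natCast_eq_natCast_iff' _ _ _).mp hab
  rcases h with rfl | hNM
  · simpa [Fin.ext_iff] using hmod
  · rwa [Nat.mod_eq_of_lt (a.2.trans_le hNM), Nat.mod_eq_of_lt (b.2.trans_le hNM),
      ← Fin.ext_iff] at hmod

theorem spider_isVertexTransitive (h : M = 0 ∨ N ≤ M) :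
    (spider k N M).IsVertexTransitive := by
  rintro ⟨x, i⟩ ⟨x', i'⟩
  have hinj : Function.Injective (fun j : Fin N => i' + ((j : ℕ) : ZMod M)) :=
    (add_right_injective i').comp (ZMod.natCast_fin_injective h)
  refine ⟨spiderTwist (Function.extend (fun j : Fin N => i' + ((j : ℕ) : ZMod M)) (x' - x) 0)
    (i' - i), ?_⟩
  rw [spiderTwist_fV, add_sub_cancel]
  refine Prod.ext (funext fun j => ?_) rfl
  dsimp only
  rw [hinj.extend_apply, Pi.sub_apply, add_sub_cancel]

theorem spider_not_isVertexTransitive [Nontrivial (ZMod k)] (hM : M ≠ 0) (hMN : M < N) :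
    ¬ (spider k N M).IsVertexTransitive := by
  intro hT
  let i₀ : Fin N := ⟨0, by omega⟩
  obtain ⟨φ, hφ⟩ := hT (fun _ => 0, 0) (Pi.single i₀ 1, 0)
  have hclosed : (spider k N M).HasDirWalk M (fun _ => 0, 0) (fun _ => 0, 0) := by
    simpa using spider_hasDirWalk_const (N := N) (0 : ZMod k) (0 : ZMod M) M
  have hperiodic := spider_apply_of_hasDirWalk (hφ ▸ φ.hasDirWalk hclosed) 0 (by omega)
  simp [i₀, hM] at hperiodic

end Spider

/-- For every `k ≥ 2`, `M ∈ ℕ ∪ {∞}` (with `M = 0` encoding `∞`) and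
`N ≥ 0`, the oriented spider-web graph `S_{k,N,M}` is vertex-transitive by (not
necessarily label-preserving) graph automorphisms if and only if `M ≥ N` (which for
`M = ∞` always holds). -/
theorem spider_vertex_transitive_iff (k N M : ℕ) (hk : 2 ≤ k) :
    (∀ u v : (spider k N M).V,
      ∃ φ : OGraph.Iso (spider k N M).toOGraph (spider k N M).toOGraph, φ.fV u = v) ↔
    (M = 0 ∨ N ≤ M) := by
  have : Fact (1 < k) := ⟨hk⟩
  refine ⟨fun hT => ?_, spider_isVertexTransitive⟩
  by_contra! h
  exact spider_not_isVertexTransitive h.1 h.2 hT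
end
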